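/- If a Banach space X does not have the L-Dunford-Pettis property, then the space W(X, ℓ∞) of weakly compact operators from X into ℓ∞ is not complemented in the space DPcc(X, ℓ∞) of Dunford-Pettis completely continuous operators from X into ℓ∞. -/

import Mathlib

/-!
Suppose `P` is a bounded projection from DPcc(X, ℓ∞) onto W(X, ℓ∞). An L-Dunford-Pettis set
`A ⊆ X'` that is not relatively weakly compact yields, by the double-limit criterion, `f m ∈ A`, `g ∈ X'`
and `x k` in the unit ball with `lim_m (f m - g) (x k) = 0` for every `k`, while
`γ m = lim_k (f m - g) (x k)` stays away from `0`. The operators `T b x = (b m * (f m - g) x)_m`,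
`b ∈ ℓ∞`, are DPcc because `A` is an L-Dunford-Pettis set, and have finite rank when `b` is the
indicator of a finite set, so that `b ↦ T b - P (T b)` vanishes on those indicators. Whitley's
argument with an uncountable almost disjoint family of infinite sets then gives one infinite set
`s` on whose indicator it vanishes at every coordinate and every `x k`. Hence the weakly compact
operator `P (T 1_s)` maps the `x k` to vectors of `ℓ∞` whose coordinates on `s` have iterated
limits `0` and `γ m`, which is impossible.
-/

open Filter Topology Metric

noncomputable section

instance : Fact ((1:ENNReal) ≤ ⊤) := ⟨le_top⟩

/-- A sequence is weakly null if every continuous linear functional sends it to a null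
sequence. -/
def WeaklyNull {X : Type*} [NormedAddCommGroup X] [NormedSpace ℝ X] (x : ℕ → X) : Prop :=
  ∀ f : X →L[ℝ] ℝ, Tendsto (fun n => f (x n)) atTop (𝓝 0)

/-- A sequence of functionals is weak*-null if it tends to zero pointwise. -/
def WeakStarNull {X : Type*} [NormedAddCommGroup X] [NormedSpace ℝ X]
    (f : ℕ → X →L[ℝ] ℝ) : Prop :=
  ∀ x : X, Tendsto (fun n => f n x) atTop (𝓝 0)

/-- A norm bounded set is a Dunford-Pettis set if every weakly null sequence of functionals
converges to zero uniformly on it. -/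
def IsDPSet {X : Type*} [NormedAddCommGroup X] [NormedSpace ℝ X] (A : Set X) : Prop :=
  Bornology.IsBounded A ∧
  ∀ f : ℕ → X →L[ℝ] ℝ, WeaklyNull f →
    Tendsto (fun n => ⨆ x : A, |f n (x : X)|) atTop (𝓝 0)

/-- A norm bounded subset of the dual is an L-set if every weakly null sequence in `X`
converges to zero uniformly on it. -/
def IsLSet {X : Type*} [NormedAddCommGroup X] [NormedSpace ℝ X]
    (A : Set (X →L[ℝ] ℝ)) : Prop :=
  Bornology.IsBounded A ∧
  ∀ x : ℕ → X, WeaklyNull x →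
    Tendsto (fun n => ⨆ f : A, |(f : X →L[ℝ] ℝ) (x n)|) atTop (𝓝 0)

/-- A norm bounded subset of the dual is an L-Dunford-Pettis set if every weakly null
sequence in `X` which is a Dunford-Pettis set converges to zero uniformly on it. -/
def IsLDPSet {X : Type*} [NormedAddCommGroup X] [NormedSpace ℝ X]
    (A : Set (X →L[ℝ] ℝ)) : Prop :=
  Bornology.IsBounded A ∧
  ∀ x : ℕ → X, WeaklyNull x → IsDPSet (Set.range x) →
    Tendsto (fun n => ⨆ f : A, |(f : X →L[ℝ] ℝ) (x n)|) atTop (𝓝 0)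

/-- A set is relatively weakly compact if its closure in the weak topology is compact. -/
def RelWeaklyCompact {X : Type*} [NormedAddCommGroup X] [NormedSpace ℝ X]
    (A : Set X) : Prop :=
  IsCompact (closure ((toWeakSpace ℝ X) '' A))

/-- The relatively compact Dunford-Pettis property: every Dunford-Pettis set is
relatively norm compact. -/
def HasDPrcP (X : Type*) [NormedAddCommGroup X] [NormedSpace ℝ X] : Prop :=
  ∀ A : Set X, IsDPSet A → IsCompact (closure A)

/-- An operator is Dunford-Pettis completely continuous if it maps weakly null sequences
that are Dunford-Pettis sets to norm null sequences. -/
def IsDPcc {X Y : Type*} [NormedAddCommGroup X] [NormedSpace ℝ X]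
    [NormedAddCommGroup Y] [NormedSpace ℝ Y] (T : X →L[ℝ] Y) : Prop :=
  ∀ x : ℕ → X, WeaklyNull x → IsDPSet (Set.range x) →
    Tendsto (fun n => ‖T (x n)‖) atTop (𝓝 0)

/-- An operator is weakly compact if the image of the closed unit ball is relatively
weakly compact. -/
def IsWeaklyCompactOp {X Y : Type*} [NormedAddCommGroup X] [NormedSpace ℝ X]
    [NormedAddCommGroup Y] [NormedSpace ℝ Y] (T : X →L[ℝ] Y) : Prop :=
  RelWeaklyCompact (T '' closedBall 0 1)

/-- The L-Dunford-Pettis property: every L-Dunford-Pettis set in the dual is relatively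
weakly compact. -/
def HasLDPProperty (X : Type*) [NormedAddCommGroup X] [NormedSpace ℝ X] : Prop :=
  ∀ A : Set (X →L[ℝ] ℝ), IsLDPSet A → RelWeaklyCompact A

/-- The Dunford-Pettis property: every relatively weakly compact set is a
Dunford-Pettis set. -/
def HasDPProperty (X : Type*) [NormedAddCommGroup X] [NormedSpace ℝ X] : Prop :=
  ∀ A : Set X, RelWeaklyCompact A → IsDPSet A

/-- Grothendieck space: every weak*-null sequence in the dual is weakly null. -/
def IsGrothendieck (X : Type*) [NormedAddCommGroup X] [NormedSpace ℝ X] : Prop :=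
  ∀ f : ℕ → X →L[ℝ] ℝ, WeakStarNull f → WeaklyNull f

/-- The space `ℓ∞` of bounded real sequences. -/
abbrev ellInfty : Type := lp (fun _ : ℕ => ℝ) ⊤

/-- `W` is complemented in `D` (both sets of operators) if there is a bounded linear
projection from `D` onto `W`. -/
def OpComplementedIn {X Y : Type*} [NormedAddCommGroup X] [NormedSpace ℝ X]
    [NormedAddCommGroup Y] [NormedSpace ℝ Y]
    (W D : Set (X →L[ℝ] Y)) : Prop :=
  ∃ P : (X →L[ℝ] Y) → (X →L[ℝ] Y),
    (∀ T ∈ D, ∀ S ∈ D, P (T + S) = P T + P S) ∧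
    (∀ (c : ℝ), ∀ T ∈ D, P (c • T) = c • P T) ∧
    (∃ C : ℝ, ∀ T ∈ D, ‖P T‖ ≤ C * ‖T‖) ∧
    (∀ T ∈ D, P T ∈ W) ∧
    (∀ T ∈ W, P T = T)

namespace ellInfty

def indicator (s : Set ℕ) : ellInfty :=
  ⟨s.indicator 1, memℓp_infty ⟨1, by
    rintro _ ⟨m, rfl⟩
    by_cases h : m ∈ s <;> simp [h]⟩⟩

@[simp] lemma indicator_apply (s : Set ℕ) (m : ℕ) : indicator s m = s.indicator 1 m := rfl

lemma indicator_union_of_disjoint {s t : Set ℕ} (h : Disjoint s t) :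
    indicator (s ∪ t) = indicator s + indicator t := by
  ext m
  simp [Set.indicator_union_of_disjoint h]

lemma norm_sum_smul_indicator_le {ι : Type*} {t : Finset ι} {B : ι → Set ℕ}
    (hB : (t : Set ι).PairwiseDisjoint B) {c : ι → ℝ} (hc : ∀ i ∈ t, |c i| ≤ 1) :
    ‖∑ i ∈ t, c i • indicator (B i)‖ ≤ 1 := by
  refine lp.norm_le_of_forall_le' 1 fun m => ?_
  simp only [lp.coeFn_sum, Finset.sum_apply, lp.coeFn_smul, Pi.smul_apply, indicator_apply,
    smul_eq_mul, Real.norm_eq_abs]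
  by_cases hm : ∃ i ∈ t, m ∈ B i
  · obtain ⟨i, hi, hmi⟩ := hm
    rw [Finset.sum_eq_single_of_mem i hi fun j hj hji => ?_]
    · simpa [hmi] using hc i hi
    · have : m ∉ B j := fun hmj => Set.disjoint_left.1 (hB hj hi hji) hmj hmi
      simp [this]
  · simp only [not_exists, not_and] at hm
    rw [Finset.sum_eq_zero fun i hi => by simp [hm i hi]]
    simp

def supportedOn (s : Set ℕ) : Submodule ℝ ellInfty where
  carrier := {v | ∀ m ∉ s, v m = 0}
  add_mem' hu hv m hm := by simp [hu m hm, hv m hm]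
  zero_mem' _ _ := rfl
  smul_mem' c v hv m hm := by simp [hv m hm]

lemma finiteDimensional_supportedOn {s : Set ℕ} (hs : s.Finite) :
    FiniteDimensional ℝ (supportedOn s) := by
  have := hs.to_subtype
  refine FiniteDimensional.of_injective (LinearMap.pi fun i : s =>
    (lp.evalₗ (𝕜 := ℝ) (fun _ : ℕ => ℝ) ⊤ i).comp (supportedOn s).subtype) fun u v huv => ?_
  ext m
  by_cases hm : m ∈ s
  · exact congrFun huv ⟨m, hm⟩
  · rw [u.2 m hm, v.2 m hm]

lemma exists_clm_tendsto_ultrafilter (U : Ultrafilter ℕ) :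
    ∃ ψ : ellInfty →L[ℝ] ℝ, ∀ v : ellInfty, Tendsto (fun m => v m) U (𝓝 (ψ v)) := by
  have hex : ∀ v : ellInfty, ∃ a, Tendsto (fun m => v m) U (𝓝 a) := fun v => by
    obtain ⟨a, -, ha⟩ := (isCompact_closedBall (0 : ℝ) ‖v‖).ultrafilter_le_nhds
      (U.map fun m => v m) (by
        rw [Ultrafilter.coe_map, le_principal_iff]
        exact mem_map.2 (univ_mem' fun m => mem_closedBall_zero_iff.2
          (lp.norm_apply_le_norm ENNReal.top_ne_zero v m)))
    exact ⟨a, ha⟩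
  choose ψ hψ using hex
  let ψₗ : ellInfty →ₗ[ℝ] ℝ :=
    { toFun := ψ
      map_add' := fun u v => tendsto_nhds_unique (hψ (u + v)) (by simpa using (hψ u).add (hψ v))
      map_smul' := fun c v =>
        tendsto_nhds_unique (hψ (c • v)) (by simpa using (hψ v).const_smul c) }
  refine ⟨ψₗ.mkContinuous 1 fun v => ?_, hψ⟩
  rw [one_mul]
  exact le_of_tendsto (hψ v).norm
    (Eventually.of_forall fun m => lp.norm_apply_le_norm ENNReal.top_ne_zero v m)

/-- Whitley's disjointification: removing the finitely many common points of the sets turns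
them into disjoint sets without changing the values of `φ`. -/
lemma sum_abs_apply_indicator_le (φ : ellInfty →L[ℝ] ℝ)
    (hφ : ∀ s : Set ℕ, s.Finite → φ (indicator s) = 0) {ι : Type*} {𝒜 : ι → Set ℕ}
    (h𝒜 : Pairwise fun i j => (𝒜 i ∩ 𝒜 j).Finite) (t : Finset ι) :
    ∑ i ∈ t, |φ (indicator (𝒜 i))| ≤ ‖φ‖ := by
  classical
  set B : ι → Set ℕ := fun i => 𝒜 i \ ⋃ j ∈ t.erase i, 𝒜 j
  have hB : (t : Set ι).PairwiseDisjoint B := by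
    intro i hi j hj hij
    refine Set.disjoint_left.2 fun m hmi hmj => hmj.2 ?_
    exact Set.mem_biUnion (Finset.mem_erase.2 ⟨hij, hi⟩) hmi.1
  have hφB : ∀ i, φ (indicator (B i)) = φ (indicator (𝒜 i)) := by
    intro i
    have hfin : (𝒜 i \ B i).Finite := by
      rw [Set.sdiff_sdiff_right_self, Set.inter_iUnion₂]
      exact (t.erase i).finite_toSet.biUnion fun j hj => h𝒜 (Finset.ne_of_mem_erase hj).symm
    rw [← Set.union_sdiff_cancel (Set.sdiff_subset : B i ⊆ 𝒜 i),
      indicator_union_of_disjoint disjoint_sdiff_self_right, map_add, hφ _ hfin, add_zero]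
  set c : ι → ℝ := fun i => SignType.sign (φ (indicator (𝒜 i)))
  have hc : ∀ i ∈ t, |c i| ≤ 1 := fun i _ => by
    simp only [c]
    generalize SignType.sign (φ (indicator (𝒜 i))) = σ
    rcases σ.trichotomy with h | h | h <;> simp [h]
  calc ∑ i ∈ t, |φ (indicator (𝒜 i))| = φ (∑ i ∈ t, c i • indicator (B i)) := by
        simp [map_sum, hφB, c, sign_mul_self]
    _ ≤ ‖φ‖ * ‖∑ i ∈ t, c i • indicator (B i)‖ := (le_abs_self _).trans (φ.le_opNorm _)
    _ ≤ ‖φ‖ := mul_le_of_le_one_right (norm_nonneg φ) (norm_sum_smul_indicator_le hB hc)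

lemma countable_setOf_apply_indicator_ne_zero (φ : ellInfty →L[ℝ] ℝ)
    (hφ : ∀ s : Set ℕ, s.Finite → φ (indicator s) = 0) {ι : Type*} {𝒜 : ι → Set ℕ}
    (h𝒜 : Pairwise fun i j => (𝒜 i ∩ 𝒜 j).Finite) :
    {i | φ (indicator (𝒜 i)) ≠ 0}.Countable :=
  (Summable.of_abs (summable_of_sum_le (fun _ => abs_nonneg _)
    (sum_abs_apply_indicator_le φ hφ h𝒜))).countable_support

lemma exists_forall_apply_indicator_eq_zero {κ ι : Type*} [Countable κ] [Uncountable ι]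
    (φ : κ → ellInfty →L[ℝ] ℝ) (hφ : ∀ j, ∀ s : Set ℕ, s.Finite → φ j (indicator s) = 0)
    {𝒜 : ι → Set ℕ} (h𝒜 : Pairwise fun i j => (𝒜 i ∩ 𝒜 j).Finite) :
    ∃ i, ∀ j, φ j (indicator (𝒜 i)) = 0 := by
  by_contra! h
  refine Set.not_countable_univ
    ((Set.countable_iUnion fun j => countable_setOf_apply_indicator_ne_zero (φ j) (hφ j) h𝒜).mono
      fun i _ => ?_)
  obtain ⟨j, hj⟩ := h i
  exact Set.mem_iUnion.2 ⟨j, hj⟩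

end ellInfty

/-- The nodes (finite prefixes) of the branch `s` of the binary tree, coded by natural numbers. -/
def branch (s : ℕ → Bool) : Set ℕ :=
  Set.range fun n => Encodable.encode (List.ofFn fun i : Fin n => s i)

lemma branch_infinite (s : ℕ → Bool) : (branch s).Infinite :=
  Set.infinite_range_of_injective fun n n' h => by
    simpa using congrArg List.length (Encodable.encode_injective h)

lemma pairwise_branch_inter_finite : Pairwise fun s t => (branch s ∩ branch t).Finite := by
  intro s t hst
  obtain ⟨i, hi⟩ := Function.ne_iff.1 hst
  refine ((Set.finite_Iic i).image fun n =>
    Encodable.encode (List.ofFn fun j : Fin n => s j)).subset ?_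
  rintro _ ⟨⟨n, rfl⟩, ⟨n', h⟩⟩
  refine ⟨n, Set.mem_Iic.2 (not_lt.1 fun hin => hi ?_), rfl⟩
  have h := Encodable.encode_injective h
  obtain rfl : n' = n := by simpa using congrArg List.length h
  simpa [List.getElem?_ofFn, hin] using (congrArg (·[i]?) h).symm

instance : Uncountable (ℕ → Bool) := by
  rw [← Cardinal.aleph0_lt_mk_iff, ← Cardinal.power_def]
  simpa using Cardinal.aleph0_lt_continuum

lemma RelWeaklyCompact.mono {E : Type*} [NormedAddCommGroup E] [NormedSpace ℝ E] {s t : Set E}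
    (ht : RelWeaklyCompact t) (hst : s ⊆ t) : RelWeaklyCompact s :=
  ht.of_isClosed_subset isClosed_closure (closure_mono (Set.image_mono hst))

lemma IsWeaklyCompactOp.relWeaklyCompact_range {X Y : Type*} [NormedAddCommGroup X]
    [NormedSpace ℝ X] [NormedAddCommGroup Y] [NormedSpace ℝ Y] {S : X →L[ℝ] Y}
    (hS : IsWeaklyCompactOp S) {x : ℕ → X} (hx : ∀ k, ‖x k‖ ≤ 1) :
    RelWeaklyCompact (Set.range fun k => S (x k)) :=
  RelWeaklyCompact.mono hS <| by
    rintro _ ⟨k, rfl⟩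
    exact ⟨x k, mem_closedBall_zero_iff.2 (hx k), rfl⟩

lemma IsCompact.relWeaklyCompact_of_subset {E : Type*} [NormedAddCommGroup E] [NormedSpace ℝ E]
    {K s : Set E} (hK : IsCompact K) (hsK : s ⊆ K) : RelWeaklyCompact s := by
  have hK' : IsCompact (toWeakSpace ℝ E '' K) := by
    simpa only [← toWeakSpaceCLM_eq_toWeakSpace] using
      hK.image (toWeakSpaceCLM ℝ E).continuous
  exact hK'.of_isClosed_subset isClosed_closure
    (closure_minimal (Set.image_mono hsK) hK'.isClosed)

lemma RelWeaklyCompact.exists_forall_tendsto_eq {E : Type*} [NormedAddCommGroup E]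
    [NormedSpace ℝ E] {v : ℕ → E} (hv : RelWeaklyCompact (Set.range v)) :
    ∃ y : E, ∀ (ψ : E →L[ℝ] ℝ) (L : ℝ), Tendsto (fun k => ψ (v k)) atTop (𝓝 L) → ψ y = L := by
  obtain ⟨y, -, hy⟩ := hv.exists_clusterPt (f := map (fun k => toWeakSpace ℝ E (v k)) atTop)
    (le_principal_iff.2 (mem_map.2 (Eventually.of_forall fun k =>
      subset_closure ⟨v k, ⟨k, rfl⟩, rfl⟩)))
  refine ⟨(toWeakSpace ℝ E).symm y, fun ψ L hL => ?_⟩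
  have hψ : Continuous fun w : WeakSpace ℝ E => ψ ((toWeakSpace ℝ E).symm w) :=
    WeakBilin.eval_continuous _ ψ
  have h : ClusterPt (ψ ((toWeakSpace ℝ E).symm y)) (𝓝 L) :=
    (hy.map hψ.continuousAt tendsto_map).mono (by rwa [map_map])
  exact eq_of_nhds_neBot h.neBot

lemma isWeaklyCompactOp_of_forall_mem {X Y : Type*} [NormedAddCommGroup X] [NormedSpace ℝ X]
    [NormedAddCommGroup Y] [NormedSpace ℝ Y] (T : X →L[ℝ] Y) (V : Submodule ℝ Y)
    [FiniteDimensional ℝ V] (hT : ∀ x, T x ∈ V) : IsWeaklyCompactOp T := by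
  refine ((isCompact_closedBall (0 : V) ‖T‖).image continuous_subtype_val)
    |>.relWeaklyCompact_of_subset ?_
  rintro _ ⟨x, hx, rfl⟩
  refine ⟨⟨T x, hT x⟩, ?_, rfl⟩
  simpa using T.le_of_opNorm_le_of_le le_rfl (mem_closedBall_zero_iff.1 hx)

/-- The limit along an ultrafilter containing `s` vanishes on every `v k` but not on a weak
cluster point of `v`. -/
lemma not_relWeaklyCompact_range_of_iterated_limits {v : ℕ → ellInfty} {s : Set ℕ}
    (hs : s.Infinite) {a : ℕ → ℕ → ℝ} {γ : ℕ → ℝ} {ε : ℝ} (hε : 0 < ε)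
    (hv : ∀ m ∈ s, ∀ k, v k m = a m k)
    (h_row : ∀ k, Tendsto (fun m => a m k) atTop (𝓝 0))
    (h_col : ∀ m, Tendsto (a m) atTop (𝓝 (γ m))) (hγ : ∀ m, ε ≤ |γ m|) :
    ¬ RelWeaklyCompact (Set.range v) := by
  intro hrwc
  obtain ⟨y, hy⟩ := hrwc.exists_forall_tendsto_eq
  have : (atTop ⊓ 𝓟 s).NeBot := by
    rw [← Nat.cofinite_eq_atTop]
    exact hs.cofinite_inf_principal_neBot
  set U := Ultrafilter.of (atTop ⊓ 𝓟 s)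
  have hU_atTop : (U : Filter ℕ) ≤ atTop := (Ultrafilter.of_le _).trans inf_le_left
  have hU_s : s ∈ U := le_principal_iff.1 ((Ultrafilter.of_le _).trans inf_le_right)
  obtain ⟨ψ, hψ⟩ := ellInfty.exists_clm_tendsto_ultrafilter U
  have hψv : ∀ k, ψ (v k) = 0 := fun k =>
    tendsto_nhds_unique (hψ (v k)) (((h_row k).mono_left hU_atTop).congr'
      (eventually_of_mem hU_s fun m hm => (hv m hm k).symm))
  have hψy : ψ y = 0 := hy ψ 0 (by simp [hψv])
  have hyγ : ∀ m ∈ s, y m = γ m := fun m hm =>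
    hy (lp.evalCLM ℝ _ ⊤ m) (γ m) (by simpa [lp.evalCLM, hv m hm] using h_col m)
  have hγU : Tendsto γ U (𝓝 0) :=
    hψy ▸ (hψ y).congr' (eventually_of_mem hU_s hyγ)
  exact hε.not_ge (by simpa using ge_of_tendsto hγU.abs (Eventually.of_forall hγ))

section Operators

variable {X : Type*} [NormedAddCommGroup X] [NormedSpace ℝ X]

def seqToEllInfty (F : ℕ → X →L[ℝ] ℝ) {R : ℝ} (hF : ∀ m, ‖F m‖ ≤ R) : X →L[ℝ] ellInfty :=
  LinearMap.mkContinuous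
    { toFun := fun x => ⟨fun m => F m x, memℓp_infty ⟨R * ‖x‖, by
        rintro _ ⟨m, rfl⟩
        exact (F m).le_of_opNorm_le (hF m) x⟩⟩
      map_add' := fun x y => by ext m; exact map_add (F m) x y
      map_smul' := fun c x => by ext m; exact map_smul (F m) c x }
    R fun x => lp.norm_le_of_forall_le' _ fun m => (F m).le_of_opNorm_le (hF m) x

@[simp] lemma seqToEllInfty_apply (F : ℕ → X →L[ℝ] ℝ) {R : ℝ} (hF : ∀ m, ‖F m‖ ≤ R) (x : X)
    (m : ℕ) : seqToEllInfty F hF x m = F m x := rfl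

def mulComp (Φ : X →L[ℝ] ellInfty) : ellInfty →L[ℝ] X →L[ℝ] ellInfty :=
  (ContinuousLinearMap.compL ℝ X ellInfty ellInfty).flip Φ ∘L ContinuousLinearMap.mul ℝ ellInfty

@[simp] lemma mulComp_apply (Φ : X →L[ℝ] ellInfty) (b : ellInfty) (x : X) (m : ℕ) :
    mulComp Φ b x m = b m * Φ x m := rfl

lemma isWeaklyCompactOp_mulComp_indicator (Φ : X →L[ℝ] ellInfty) {s : Set ℕ} (hs : s.Finite) :
    IsWeaklyCompactOp (mulComp Φ (ellInfty.indicator s)) := by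
  have := ellInfty.finiteDimensional_supportedOn hs
  exact isWeaklyCompactOp_of_forall_mem _ (ellInfty.supportedOn s) fun x m hm => by simp [hm]

lemma IsDPcc.comp {Y Z : Type*} [NormedAddCommGroup Y] [NormedSpace ℝ Y] [NormedAddCommGroup Z]
    [NormedSpace ℝ Z] {T : X →L[ℝ] Y} (hT : IsDPcc T) (L : Y →L[ℝ] Z) : IsDPcc (L ∘L T) :=
  fun x hw hdp => squeeze_zero (fun _ => norm_nonneg _) (fun n => L.le_opNorm (T (x n)))
    (by simpa using (hT x hw hdp).const_mul ‖L‖)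

lemma IsLDPSet.isDPcc_seqToEllInfty {A : Set (X →L[ℝ] ℝ)} (hA : IsLDPSet A)
    {f : ℕ → X →L[ℝ] ℝ} (hf : ∀ m, f m ∈ A) (g : X →L[ℝ] ℝ) {R : ℝ}
    (hR : ∀ m, ‖f m - g‖ ≤ R) : IsDPcc (seqToEllInfty (fun m => f m - g) hR) := by
  intro x hw hdp
  obtain ⟨M, hM⟩ := hA.1.exists_norm_le
  have hbdd : ∀ n, BddAbove (Set.range fun h : A => |(h : X →L[ℝ] ℝ) (x n)|) := fun n =>
    ⟨M * ‖x n‖, by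
      rintro _ ⟨h, rfl⟩
      exact (h : X →L[ℝ] ℝ).le_of_opNorm_le (hM h h.2) (x n)⟩
  have hbound : ∀ n, ‖seqToEllInfty (fun m => f m - g) hR (x n)‖ ≤
      (⨆ h : A, |(h : X →L[ℝ] ℝ) (x n)|) + |g (x n)| := fun n =>
    lp.norm_le_of_forall_le' _ fun m =>
      (abs_sub _ _).trans (add_le_add (le_ciSup (hbdd n) ⟨f m, hf m⟩) le_rfl)
  refine squeeze_zero (fun _ => norm_nonneg _) hbound ?_
  simpa using (hA.2 x hw hdp).add (hw g).abs

end Operators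

lemma exists_clm_eq_comp {E F : Type*} [NormedAddCommGroup E] [NormedSpace ℝ E]
    [NormedAddCommGroup F] [NormedSpace ℝ F] {D : Set F} {P : F → F}
    (hadd : ∀ u ∈ D, ∀ v ∈ D, P (u + v) = P u + P v) (hsmul : ∀ c : ℝ, ∀ u ∈ D, P (c • u) = c • P u)
    {C : ℝ} (hC : ∀ u ∈ D, ‖P u‖ ≤ C * ‖u‖) (T : E →L[ℝ] F) (hT : ∀ b, T b ∈ D) :
    ∃ Q : E →L[ℝ] F, ∀ b, Q b = P (T b) := by
  let Qₗ : E →ₗ[ℝ] F :=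
    { toFun := fun b => P (T b)
      map_add' := fun b b' => by simp [hadd _ (hT b) _ (hT b')]
      map_smul' := fun c b => by simp [hsmul c _ (hT b)] }
  refine ⟨Qₗ.mkContinuous (max C 0 * ‖T‖) fun b => ?_, fun _ => rfl⟩
  calc ‖P (T b)‖ ≤ C * ‖T b‖ := hC _ (hT b)
    _ ≤ max C 0 * ‖T b‖ := mul_le_mul_of_nonneg_right (le_max_left C 0) (norm_nonneg _)
    _ ≤ max C 0 * (‖T‖ * ‖b‖) := mul_le_mul_of_nonneg_left (T.le_opNorm b) (le_max_right C 0)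
    _ = max C 0 * ‖T‖ * ‖b‖ := (mul_assoc _ _ _).symm

lemma exists_seq_interleaved {α β : Type*} [DecidableEq α] [DecidableEq β]
    (p : Finset β → ℕ → α → Prop) (q : Finset α → ℕ → β → Prop)
    (hp : ∀ s n, ∃ a, p s n a) (hq : ∀ s n, ∃ b, q s n b) :
    ∃ (a : ℕ → α) (b : ℕ → β), (∀ n, p ((Finset.range n).image b) n (a n)) ∧
      ∀ n, q ((Finset.range (n + 1)).image a) n (b n) := by
  choose pa hpa using hp
  choose qb hqb using hq
  let st : ℕ → Finset α × Finset β := fun n => Nat.rec (∅, ∅)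
    (fun n st => (insert (pa st.2 n) st.1, insert (qb (insert (pa st.2 n) st.1) n) st.2)) n
  let a : ℕ → α := fun n => pa (st n).2 n
  let b : ℕ → β := fun n => qb (insert (a n) (st n).1) n
  have hst : ∀ n, st n = ((Finset.range n).image a, (Finset.range n).image b) := by
    intro n
    induction n with
    | zero => rfl
    | succ n ih =>
      show (insert (a n) (st n).1, insert (b n) (st n).2) = _
      rw [ih, Finset.range_add_one, Finset.image_insert, Finset.image_insert]
  refine ⟨a, b, fun n => ?_, fun n => ?_⟩
  · have h : (st n).2 = (Finset.range n).image b := by rw [hst]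
    rw [← h]
    exact hpa _ _
  · have h : (st n).1 = (Finset.range n).image a := by rw [hst]
    rw [Finset.range_add_one, Finset.image_insert, ← h]
    exact hqb _ _

lemma tendsto_of_eventually_abs_sub_lt {u : ℕ → ℝ} {c : ℝ}
    (h : ∀ᶠ n in atTop, |u n - c| < 1 / (n + 1)) : Tendsto u atTop (𝓝 c) :=
  tendsto_sub_nhds_zero_iff.1 (squeeze_zero_norm' (h.mono fun _ hn => hn.le)
    tendsto_one_div_add_atTop_nhds_zero_nat)

section DoubleLimit

variable {X : Type*} [NormedAddCommGroup X] [NormedSpace ℝ X]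

lemma ContinuousLinearMap.norm_le_of_forall_closedBall_lt (ℓ : X →L[ℝ] ℝ) {u : ℝ}
    (h : ∀ x ∈ closedBall (0 : X) 1, ℓ x < u) : ‖ℓ‖ ≤ u := by
  have hu : 0 ≤ u := by simpa using (h 0 (mem_closedBall_self zero_le_one)).le
  refine ℓ.opNorm_le_of_unit_norm hu fun x hx => abs_le.2 ⟨?_, (h x (by simp [hx])).le⟩
  have := h (-x) (by simp [hx])
  rw [map_neg] at this
  linarith

lemma apply_comp_pi {ι : Type*} [Fintype ι] (y : (X →L[ℝ] ℝ) →L[ℝ] ℝ)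
    (Λ : (ι → ℝ) →L[ℝ] ℝ) (F : ι → X →L[ℝ] ℝ) :
    y (Λ ∘L ContinuousLinearMap.pi F) = Λ fun i => y (F i) := by
  classical
  have hΛ : ∀ t : ι → ℝ, Λ t = ∑ i, t i * Λ (fun j => if i = j then 1 else 0) := fun t => by
    simpa using Λ.toLinearMap.pi_apply_eq_sum_univ t
  have hcomp : Λ ∘L ContinuousLinearMap.pi F =
      ∑ i, Λ (fun j => if i = j then 1 else 0) • F i := by
    ext x
    rw [ContinuousLinearMap.comp_apply, hΛ]
    simp [mul_comm]
  rw [hcomp, map_sum, hΛ fun i => y (F i)]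
  simp [mul_comm]

/-- Helly's lemma. -/
lemma exists_norm_le_one_forall_abs_sub_lt (y : (X →L[ℝ] ℝ) →L[ℝ] ℝ) (hy : ‖y‖ ≤ 1)
    (L : Finset (X →L[ℝ] ℝ)) {δ : ℝ} (hδ : 0 < δ) :
    ∃ x : X, ‖x‖ ≤ 1 ∧ ∀ h ∈ L, |h x - y h| < δ := by
  let ev : X →L[ℝ] (L → ℝ) := ContinuousLinearMap.pi fun h => (h : X →L[ℝ] ℝ)
  have hmem : (fun h : L => y h) ∈ closure (ev '' closedBall 0 1) := by
    by_contra hnot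
    obtain ⟨Λ, u, hΛ, hu⟩ := geometric_hahn_banach_closed_point
      ((convex_closedBall (0 : X) 1).linear_image ev.toLinearMap).closure isClosed_closure hnot
    have hnorm : ‖Λ ∘L ev‖ ≤ u := (Λ ∘L ev).norm_le_of_forall_closedBall_lt fun x hx =>
      hΛ _ (subset_closure ⟨x, hx, rfl⟩)
    have hle : y (Λ ∘L ev) ≤ u :=
      (le_abs_self _).trans ((y.le_opNorm _).trans (by nlinarith [norm_nonneg (Λ ∘L ev)]))
    rw [apply_comp_pi] at hle
    exact hu.not_ge hle
  obtain ⟨_, ⟨x, hx, rfl⟩, hdist⟩ := Metric.mem_closure_iff.1 hmem δ hδ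
  refine ⟨x, mem_closedBall_zero_iff.1 hx, fun h hh => ?_⟩
  have := (dist_le_pi_dist _ _ ⟨h, hh⟩).trans_lt hdist
  rwa [Real.dist_eq, abs_sub_comm] at this

/-- By Banach–Alaoglu the weak*-closure of `A` is weak*-compact, and the hypothesis makes the
identity continuous on it from the weak* to the weak topology. -/
lemma relWeaklyCompact_of_forall_tendsto {A : Set (X →L[ℝ] ℝ)} (hA : Bornology.IsBounded A)
    (h : ∀ (y : (X →L[ℝ] ℝ) →L[ℝ] ℝ), ∀ w ∈ closure (StrongDual.toWeakDual '' A),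
      Tendsto (fun v : WeakDual ℝ X => y (WeakDual.toStrongDual v))
        (𝓝[StrongDual.toWeakDual '' A] w) (𝓝 (y (WeakDual.toStrongDual w)))) :
    RelWeaklyCompact A := by
  set K := closure (StrongDual.toWeakDual '' A)
  obtain ⟨M, hM⟩ := hA.exists_norm_le
  have hball := WeakDual.isCompact_closedBall (𝕜 := ℝ) (E := X) 0 M
  have hK : IsCompact K := hball.of_isClosed_subset isClosed_closure
    (closure_minimal (by rintro _ ⟨f, hf, rfl⟩; simpa using hM f hf) hball.isClosed)
  have hcont : ContinuousOn (fun w => toWeakSpace ℝ _ (WeakDual.toStrongDual w)) K := by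
    refine continuousOn_iff_continuous_domRestrict.2
      (WeakBilin.continuous_of_continuous_eval _ fun y => ?_)
    refine continuousOn_iff_continuous_domRestrict.1 ?_
    refine (continuousOn_extendFrom subset_rfl fun w hw => ⟨_, h y w hw⟩).congr fun w hw => ?_
    exact (extendFrom_eq hw (h y w hw)).symm
  have hKimg := hK.image_of_continuousOn hcont
  refine hKimg.of_isClosed_subset isClosed_closure (closure_minimal ?_ hKimg.isClosed)
  rintro _ ⟨f, hf, rfl⟩
  exact ⟨StrongDual.toWeakDual f, subset_closure ⟨f, hf, rfl⟩, rfl⟩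

lemma exists_bidual_gap {A : Set (X →L[ℝ] ℝ)} (hA : Bornology.IsBounded A)
    (hnc : ¬ RelWeaklyCompact A) :
    ∃ (y : (X →L[ℝ] ℝ) →L[ℝ] ℝ) (g : X →L[ℝ] ℝ) (ε : ℝ), ‖y‖ ≤ 1 ∧ 0 < ε ∧
      ∀ (s : Finset X) (δ : ℝ), 0 < δ →
        ∃ f ∈ A, (∀ z ∈ s, |f z - g z| < δ) ∧ ε ≤ |y f - y g| := by
  obtain ⟨y, w, -, hw⟩ : ∃ (y : (X →L[ℝ] ℝ) →L[ℝ] ℝ), ∃ w ∈ closure (StrongDual.toWeakDual '' A),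
      ¬ Tendsto (fun v : WeakDual ℝ X => y (WeakDual.toStrongDual v))
        (𝓝[StrongDual.toWeakDual '' A] w) (𝓝 (y (WeakDual.toStrongDual w))) := by
    by_contra! h
    exact hnc (relWeaklyCompact_of_forall_tendsto hA h)
  obtain ⟨ε, hε, hfreq⟩ : ∃ ε > 0, ∃ᶠ v in 𝓝[StrongDual.toWeakDual '' A] w,
      ε ≤ dist (y (WeakDual.toStrongDual v)) (y (WeakDual.toStrongDual w)) := by
    simpa [Metric.tendsto_nhds] using hw
  have hc : 0 < ‖y‖ + 1 := by positivity
  refine ⟨(‖y‖ + 1)⁻¹ • y, WeakDual.toStrongDual w, ε / (‖y‖ + 1), ?_, div_pos hε hc,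
    fun s δ hδ => ?_⟩
  · refine (ContinuousLinearMap.opNorm_smul_le (‖y‖ + 1)⁻¹ y).trans ?_
    rw [norm_inv, Real.norm_of_nonneg hc.le, inv_mul_le_one₀ hc]
    linarith
  have hnear : ∀ᶠ v in 𝓝[StrongDual.toWeakDual '' A] w,
      v ∈ StrongDual.toWeakDual '' A ∧ ∀ z ∈ s, |v z - w z| < δ := by
    refine eventually_mem_nhdsWithin.and
      (nhdsWithin_le_nhds ((eventually_all_finset s).2 fun z _ => ?_))
    simpa [Real.dist_eq] using
      Metric.tendsto_nhds.1 ((WeakDual.eval_continuous z).tendsto w) δ hδ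
  obtain ⟨_, hgap, ⟨f, hf, rfl⟩, hclose⟩ := (hfreq.and_eventually hnear).exists
  refine ⟨f, hf, hclose, ?_⟩
  rw [Real.dist_eq] at hgap
  simp only [FunLike.coe_smul, Pi.smul_apply, smul_eq_mul, ← mul_sub, abs_mul,
    abs_of_pos (inv_pos.2 hc)]
  rw [div_eq_inv_mul]
  exact mul_le_mul_of_nonneg_left hgap (inv_pos.2 hc).le

/-- Grothendieck's double-limit criterion. The element `y` of the bidual is approximated
alternately: `f m` is close to `g` at the earlier `x k`, and `x k` is chosen by Helly's lemma so
that the earlier `f m` and `g` take at `x k` nearly the values `y` gives them. -/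
theorem exists_iterated_limits_of_not_relWeaklyCompact {A : Set (X →L[ℝ] ℝ)}
    (hA : Bornology.IsBounded A) (hnc : ¬ RelWeaklyCompact A) :
    ∃ (f : ℕ → X →L[ℝ] ℝ) (g : X →L[ℝ] ℝ) (x : ℕ → X) (γ : ℕ → ℝ) (ε : ℝ),
      (∀ m, f m ∈ A) ∧ (∀ k, ‖x k‖ ≤ 1) ∧ 0 < ε ∧
      (∀ k, Tendsto (fun m => f m (x k) - g (x k)) atTop (𝓝 0)) ∧
      (∀ m, Tendsto (fun k => f m (x k) - g (x k)) atTop (𝓝 (γ m))) ∧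
      ∀ m, ε ≤ |γ m| := by
  classical
  obtain ⟨y, g, ε, hy, hε, hgap⟩ := exists_bidual_gap hA hnc
  obtain ⟨f, x, hf, hx⟩ := exists_seq_interleaved
    (fun s n f => f ∈ A ∧ (∀ z ∈ s, |f z - g z| < 1 / (n + 1)) ∧ ε ≤ |y f - y g|)
    (fun L n x => ‖x‖ ≤ 1 ∧ ∀ h ∈ insert g L, |h x - y h| < 1 / (n + 1))
    (fun s n => hgap s _ Nat.one_div_pos_of_nat)
    (fun L n => exists_norm_le_one_forall_abs_sub_lt y hy _ Nat.one_div_pos_of_nat)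
  refine ⟨f, g, x, fun m => y (f m) - y g, ε, fun m => (hf m).1, fun k => (hx k).1, hε,
    fun k => tendsto_of_eventually_abs_sub_lt ?_, fun m => ?_, fun m => (hf m).2.2⟩
  · filter_upwards [eventually_gt_atTop k] with m hm
    simpa using (hf m).2.1 (x k) (Finset.mem_image_of_mem x (Finset.mem_range.2 hm))
  · refine (tendsto_of_eventually_abs_sub_lt ?_).sub
      (tendsto_of_eventually_abs_sub_lt (Eventually.of_forall fun k =>
        (hx k).2 g (Finset.mem_insert_self _ _)))
    filter_upwards [eventually_ge_atTop m] with k hk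
    exact (hx k).2 (f m) (Finset.mem_insert_of_mem
      (Finset.mem_image_of_mem f (Finset.mem_range.2 (Nat.lt_succ_of_le hk))))

end DoubleLimit

theorem stmt17_general {X : Type*} [NormedAddCommGroup X] [NormedSpace ℝ X]
    (hX : ¬ HasLDPProperty X) :
    ¬ OpComplementedIn {T : X →L[ℝ] ellInfty | IsWeaklyCompactOp T}
        {T : X →L[ℝ] ellInfty | IsDPcc T} := by
  rintro ⟨P, hP_add, hP_smul, ⟨C, hC⟩, hP_mem, hP_fix⟩
  obtain ⟨A, hA, hAnc⟩ : ∃ A, IsLDPSet A ∧ ¬ RelWeaklyCompact A := by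
    simpa [HasLDPProperty] using hX
  obtain ⟨f, g, x, γ, ε, hfA, hx, hε, h_row, h_col, hγ⟩ :=
    exists_iterated_limits_of_not_relWeaklyCompact hA.1 hAnc
  obtain ⟨R, hR⟩ : ∃ R, ∀ m, ‖f m - g‖ ≤ R := by
    obtain ⟨M, hM⟩ := hA.1.exists_norm_le
    exact ⟨M + ‖g‖, fun m => (norm_sub_le _ _).trans (by gcongr; exact hM _ (hfA m))⟩
  set T := mulComp (seqToEllInfty (fun m => f m - g) hR)
  have hT : ∀ b, IsDPcc (T b) := fun b =>
    (hA.isDPcc_seqToEllInfty hfA g hR).comp (ContinuousLinearMap.mul ℝ ellInfty b)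
  obtain ⟨Q, hQ⟩ := exists_clm_eq_comp hP_add hP_smul hC T hT
  -- `T b` is weakly compact, hence fixed by `P`, when `b` is the indicator of a finite set
  obtain ⟨s, hs⟩ := ellInfty.exists_forall_apply_indicator_eq_zero
    (fun p : ℕ × ℕ =>
      lp.evalCLM ℝ _ ⊤ p.1 ∘L ContinuousLinearMap.apply ℝ ellInfty (x p.2) ∘L (T - Q))
    (fun p s hs => by
      simp [hQ, hP_fix (T _) (isWeaklyCompactOp_mulComp_indicator _ hs)])
    pairwise_branch_inter_finite
  set S := Q (ellInfty.indicator (branch s))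
  have hS : IsWeaklyCompactOp S := by
    simpa [S, hQ] using hP_mem _ (hT (ellInfty.indicator (branch s)))
  refine not_relWeaklyCompact_range_of_iterated_limits (branch_infinite s) hε
    (fun m hm k => ?_) h_row h_col hγ (hS.relWeaklyCompact_range hx)
  have h := hs (m, k)
  simp [T, lp.evalCLM, hm, sub_eq_zero] at h
  exact h.symm

theorem stmt17 {X : Type*} [NormedAddCommGroup X] [NormedSpace ℝ X] [CompleteSpace X]
    (hX : ¬ HasLDPProperty X) :
    ¬ OpComplementedIn {T : X →L[ℝ] ellInfty | IsWeaklyCompactOp T}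
        {T : X →L[ℝ] ellInfty | IsDPcc T} :=
  stmt17_general hX
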